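/- arXiv:1803.00724 — 10 statements merged into one kernel-verified Lean document; each statement's English description precedes it below -/
import Mathlib

section
/- Let n be a positive integer and let a ∈ T_n with rank(a) = r. Then the local subsemigroup aT_na (with the composition operation of T_n) is isomorphic as a semigroup to the variant T_r^c for some c ∈ T_r with rank(c) = rank(a²). -/
/-!
Write `A = im a`. An element `a ∘ u ∘ a` of `a T_n a` is determined by the map `A → A`,
`t ↦ a (u t)`, and every `h : A → A` arises this way (take `u = s ∘ h` on `A` for a section
`s` of `a`). Under this bijection the product `(a ∘ v ∘ a) ∘ (a ∘ u ∘ a)` corresponds to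
`h_v ∘ a|_A ∘ h_u`, so `a T_n a` is the variant `T_A^{a|_A}`, and `im (a|_A) = im (a²)`.
It remains to transport along `A ≃ Fin r`.
-/

open Set Function

namespace Transformation

variable {α : Type*}

def localSubsemigroup (a : α → α) : Set (α → α) := {x | ∃ u, x = a ∘ u ∘ a}

def rangeRestrict (a : α → α) : range a → range a := rangeFactorization a ∘ Subtype.val

def liftRange (a : α → α) (h : range a → range a) : α → α :=
  Subtype.val ∘ h ∘ rangeFactorization a

theorem liftRange_injective (a : α → α) : Injective (liftRange a) :=
  rangeFactorization_surjective.injective_comp_right.comp Subtype.val_injective.comp_left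

theorem liftRange_comp (a : α → α) (h₁ h₂ : range a → range a) :
    liftRange a h₂ ∘ liftRange a h₁ = liftRange a (h₂ ∘ rangeRestrict a ∘ h₁) :=
  rfl

theorem range_liftRange (a : α → α) : range (liftRange a) = localSubsemigroup a := by
  classical
  ext x
  constructor
  · rintro ⟨h, rfl⟩
    let u : α → α := fun t =>
      if ht : t ∈ range a then rangeSplitting a (h ⟨t, ht⟩) else t
    refine ⟨u, funext fun s => ?_⟩
    simp [liftRange, u, apply_rangeSplitting, rangeFactorization]
  · rintro ⟨u, rfl⟩
    exact ⟨rangeFactorization a ∘ u ∘ Subtype.val, rfl⟩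

theorem ncard_range_rangeRestrict (a : α → α) :
    (range (rangeRestrict a)).ncard = (range (a ∘ a)).ncard := by
  have : Subtype.val '' range (rangeRestrict a) = range (a ∘ a) := by
    rw [← range_comp]
    change range (a ∘ Subtype.val) = _
    rw [range_comp, Subtype.range_coe, range_comp]
  rw [← this, ncard_image_of_injective _ Subtype.val_injective]

theorem exists_bijOn_localSubsemigroup (a : α → α) :
    ∃ φ : (α → α) → (range a → range a),
      BijOn φ (localSubsemigroup a) univ ∧
      ∀ x ∈ localSubsemigroup a, ∀ y ∈ localSubsemigroup a,
        φ (y ∘ x) = φ y ∘ rangeRestrict a ∘ φ x := by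
  have : Nonempty (range a → range a) := ⟨id⟩
  have hinv : LeftInverse (invFun (liftRange a)) (liftRange a) :=
    leftInverse_invFun (liftRange_injective a)
  refine ⟨invFun (liftRange a), ?_, ?_⟩
  · rw [← range_liftRange]
    refine InvOn.bijOn ⟨fun x ⟨h, hx⟩ => ?_, fun h _ => hinv h⟩
      (mapsTo_univ _ _) (fun h _ => mem_range_self h)
    rw [← hx, hinv]
  · rw [← range_liftRange]
    rintro _ ⟨h₁, rfl⟩ _ ⟨h₂, rfl⟩
    rw [liftRange_comp, hinv, hinv, hinv]

theorem ncard_range_conj {β : Type*} (e : α ≃ β) (f : α → α) :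
    (range (e.conj f)).ncard = (range f).ncard := by
  change (range (e ∘ f ∘ e.symm)).ncard = _
  rw [range_comp, e.symm.surjective.range_comp,
    ncard_image_of_injective _ e.injective]

end Transformation

/-- Composition in `T_n` is read left to right: the product of `x` and `y` is `y ∘ x`,
and `x ⋆_c y = y ∘ c ∘ x`. -/
theorem stmt_0_general (n r : ℕ) (a : Fin n → Fin n)
    (hr : Set.ncard (Set.range a) = r) :
    ∃ c : Fin r → Fin r,
      Set.ncard (Set.range c) = Set.ncard (Set.range (a ∘ a)) ∧
      ∃ φ : (Fin n → Fin n) → (Fin r → Fin r),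
        Set.BijOn φ {x : Fin n → Fin n | ∃ u, x = a ∘ u ∘ a} Set.univ ∧
        ∀ x ∈ {x : Fin n → Fin n | ∃ u, x = a ∘ u ∘ a},
          ∀ y ∈ {x : Fin n → Fin n | ∃ u, x = a ∘ u ∘ a},
            φ (y ∘ x) = φ y ∘ c ∘ φ x := by
  obtain ⟨φ, hbij, hmul⟩ := Transformation.exists_bijOn_localSubsemigroup a
  let e : range a ≃ Fin r := Finite.equivFinOfCardEq (by rw [← hr, Nat.card_coe_set_eq])
  refine ⟨e.conj (Transformation.rangeRestrict a), ?_, e.conj ∘ φ,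
    e.conj.bijective.bijOn_univ.comp hbij, ?_⟩
  · rw [Transformation.ncard_range_conj, Transformation.ncard_range_rangeRestrict]
  · intro x hx y hy
    simp only [comp_apply, hmul x hx y hy, Equiv.conj_comp]

/-- Let `n` be a positive integer and `a ∈ T_n` with `rank a = r`.
Then the local subsemigroup `a T_n a` (under the composition of `T_n`, written
left-to-right: the product of `x` and `y` is "`x` then `y`", i.e. `y ∘ x`) is
isomorphic to the variant `T_r^c` (with operation `x ⋆_c y = y ∘ c ∘ x`, i.e.
"`x` then `c` then `y`") for some `c ∈ T_r` with `rank c = rank (a²)`. -/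
theorem stmt_0 (n r : ℕ) (hn : 0 < n) (a : Fin n → Fin n)
    (hr : Set.ncard (Set.range a) = r) :
    ∃ c : Fin r → Fin r,
      Set.ncard (Set.range c) = Set.ncard (Set.range (a ∘ a)) ∧
      ∃ φ : (Fin n → Fin n) → (Fin r → Fin r),
        Set.BijOn φ {x : Fin n → Fin n | ∃ u, x = a ∘ u ∘ a} Set.univ ∧
        ∀ x ∈ {x : Fin n → Fin n | ∃ u, x = a ∘ u ∘ a},
          ∀ y ∈ {x : Fin n → Fin n | ∃ u, x = a ∘ u ∘ a},
            φ (y ∘ x) = φ y ∘ c ∘ φ x :=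
  stmt_0_general n r a hr
end

section
/- Let n be a positive integer and let a ∈ T_n with rank(a) = r. Then the variant T_n^a is isomorphic as a semigroup to the local subsemigroup bT_{2n−r}b for some b ∈ T_{2n−r} with rank(b) = n. -/
/-!
Factor `a = p ∘ j` through a set of size `2n - r`, namely `Fin n ⊕ (range a)ᶜ`, with `j` injective
and `p` surjective. Then `b = j ∘ p` has rank `n`, and `x ↦ j ∘ x ∘ p` is an isomorphism onto
`b T b`: it turns `y ∘ a ∘ x = y ∘ p ∘ j ∘ x` into `(j ∘ y ∘ p) ∘ (j ∘ x ∘ p)`, and injectivity of `j`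
together with surjectivity of `p` make it a bijection.
-/
open Function Set

section LocalEmbedding

variable {α β : Type*} {j : α → β} {p : β → α}

theorem bijOn_conj_localSubsemigroup (hj : Injective j) (hp : Surjective p) :
    BijOn (fun x : α → α => j ∘ x ∘ p) univ {x | ∃ u, x = (j ∘ p) ∘ u ∘ (j ∘ p)} := by
  refine ⟨fun x _ => ?_, fun x _ y _ hxy => ?_, ?_⟩
  · -- on `range j`, `u` lifts `x` through `p`; off it, any value will do
    refine ⟨extend j (surjInv hp ∘ x) id, funext fun k => ?_⟩
    simp [hj.extend_apply, surjInv_eq hp]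
  · funext k
    obtain ⟨w, rfl⟩ := hp k
    exact hj (congrFun hxy w)
  · rintro _ ⟨u, rfl⟩
    exact ⟨p ∘ u ∘ j, mem_univ _, rfl⟩

theorem conj_comp_comp {a : α → α} (ha : p ∘ j = a) (x y : α → α) :
    j ∘ (y ∘ a ∘ x) ∘ p = (j ∘ y ∘ p) ∘ (j ∘ x ∘ p) := by
  subst ha; rfl

end LocalEmbedding

theorem exists_injective_surjective_factor_fin {n : ℕ} (a : Fin n → Fin n) :
    ∃ (j : Fin n → Fin (2 * n - (range a).ncard)) (p : Fin (2 * n - (range a).ncard) → Fin n),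
      Injective j ∧ Surjective p ∧ p ∘ j = a := by
  have hcard : Nat.card (Fin n ⊕ ((range a)ᶜ : Set (Fin n))) = 2 * n - (range a).ncard := by
    have hr : (range a).ncard ≤ n := by
      simpa using Set.ncard_le_card (range a)
    rw [Nat.card_sum, Nat.card_coe_set_eq, Set.ncard_compl, Nat.card_fin]
    omega
  let e := Finite.equivFinOfCardEq hcard
  refine ⟨e ∘ Sum.inl, Sum.elim a Subtype.val ∘ e.symm, e.injective.comp Sum.inl_injective,
    ?_, funext fun k => by simp⟩
  intro y
  by_cases hy : y ∈ range a
  · obtain ⟨x, rfl⟩ := hy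
    exact ⟨e (Sum.inl x), by simp⟩
  · exact ⟨e (Sum.inr ⟨y, hy⟩), by simp⟩

theorem stmt_1_general (n r : ℕ) (a : Fin n → Fin n)
    (hr : Set.ncard (Set.range a) = r) :
    ∃ b : Fin (2 * n - r) → Fin (2 * n - r),
      Set.ncard (Set.range b) = n ∧
      ∃ φ : (Fin n → Fin n) → (Fin (2 * n - r) → Fin (2 * n - r)),
        Set.BijOn φ Set.univ {x : Fin (2 * n - r) → Fin (2 * n - r) | ∃ u, x = b ∘ u ∘ b} ∧
        ∀ x y : Fin n → Fin n, φ (y ∘ a ∘ x) = φ y ∘ φ x := by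
  subst hr
  obtain ⟨j, p, hj, hp, ha⟩ := exists_injective_surjective_factor_fin a
  refine ⟨j ∘ p, ?_, fun x => j ∘ x ∘ p, bijOn_conj_localSubsemigroup hj hp, conj_comp_comp ha⟩
  rw [hp.range_comp, ncard_range_of_injective hj, Nat.card_fin]

/-- Let `n` be a positive integer and `a ∈ T_n` with `rank a = r`.
Then the variant `T_n^a` (with operation `x ⋆_a y = y ∘ a ∘ x`, composing
left-to-right: "`x` then `a` then `y`") is isomorphic to the local subsemigroup
`b T_{2n-r} b` (under left-to-right composition: the product of `x` and `y` is
`y ∘ x`) for some `b ∈ T_{2n-r}` with `rank b = n`. -/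
theorem stmt_1 (n r : ℕ) (hn : 0 < n) (a : Fin n → Fin n)
    (hr : Set.ncard (Set.range a) = r) :
    ∃ b : Fin (2 * n - r) → Fin (2 * n - r),
      Set.ncard (Set.range b) = n ∧
      ∃ φ : (Fin n → Fin n) → (Fin (2 * n - r) → Fin (2 * n - r)),
        Set.BijOn φ Set.univ {x : Fin (2 * n - r) → Fin (2 * n - r) | ∃ u, x = b ∘ u ∘ b} ∧
        ∀ x y : Fin n → Fin n, φ (y ∘ a ∘ x) = φ y ∘ φ x :=
  stmt_1_general n r a hr
end

section
/- Let a and b be elements of a semigroup S satisfying a = aba and b = bab. Then the map aSa → bSb : x ↦ bxb is a bijection, with inverse bSb → aSa : x ↦ axa. -/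
theorem sandwich_sandwich_of_eq_mul_mul {S : Type*} [Semigroup S] {a b : S}
    (h : a = a * b * a) (u : S) : a * (b * (a * u * a) * b) * a = a * u * a :=
  calc a * (b * (a * u * a) * b) * a = (a * b * a) * u * (a * b * a) := by simp only [mul_assoc]
    _ = a * u * a := by rw [← h]

/-- If `a = aba` and `b = bab` in a semigroup `S`, then
`aSa → bSb : x ↦ bxb` is a bijection with inverse `bSb → aSa : x ↦ axa`. -/
theorem stmt_4 {S : Type*} [Semigroup S] (a b : S)
    (ha : a = a * b * a) (hb : b = b * a * b) :
    (∀ x ∈ {x : S | ∃ u, x = a * u * a}, b * x * b ∈ {x : S | ∃ u, x = b * u * b}) ∧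
    (∀ x ∈ {x : S | ∃ u, x = b * u * b}, a * x * a ∈ {x : S | ∃ u, x = a * u * a}) ∧
    (∀ x ∈ {x : S | ∃ u, x = a * u * a}, a * (b * x * b) * a = x) ∧
    (∀ x ∈ {x : S | ∃ u, x = b * u * b}, b * (a * x * a) * b = x) := by
  refine ⟨?_, ?_, ?_, ?_⟩
  · rintro _ ⟨u, rfl⟩
    exact ⟨a * u * a, rfl⟩
  · rintro _ ⟨u, rfl⟩
    exact ⟨b * u * b, rfl⟩
  · rintro _ ⟨u, rfl⟩
    exact sandwich_sandwich_of_eq_mul_mul ha u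
  · rintro _ ⟨u, rfl⟩
    exact sandwich_sandwich_of_eq_mul_mul hb u
end

section
/- Let a and b be elements of a semigroup S satisfying a = aba and b = bab. Then a is an idempotent of the variant S^b (i.e. a ⋆_b a = a), the set aSa equals {a ⋆_b x ⋆_b a : x ∈ S}, and (aSa, ⋆_b) is a monoid with identity element a. -/
/-! Since `a * b * a = a`, the element `a` absorbs `b * a` on the right and `a * b` on the left,
so each `a * u * a` is fixed by `x ↦ a * b * x` and `x ↦ x * b * a`, and the
product `(a * u * a) * b * (a * v * a)` collapses to `a * (u * a * v) * a`. -/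

section RegularPair

variable {S : Type*} [Semigroup S] {a b : S}

theorem mul_mul_sandwich_of_mul_mul_eq (h : a * b * a = a) (u : S) :
    a * b * (a * u * a) = a * u * a := by
  rw [← mul_assoc, ← mul_assoc, h]

theorem sandwich_mul_mul_of_mul_mul_eq (h : a * b * a = a) (u : S) :
    a * u * a * b * a = a * u * a := by
  rw [mul_assoc _ b, mul_assoc _ a (b * a), ← mul_assoc a b, h]

theorem sandwich_mul_sandwich_of_mul_mul_eq (h : a * b * a = a) (u v : S) :
    a * u * a * b * (a * v * a) = a * (u * a * v) * a := by
  calc a * u * a * b * (a * v * a) = a * u * (a * b * a) * v * a := by simp only [mul_assoc]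
    _ = a * (u * a * v) * a := by rw [h]; simp only [mul_assoc]

theorem exists_eq_sandwich_iff_of_mul_mul_eq (h : a * b * a = a) (x : S) :
    (∃ u, x = a * u * a) ↔ ∃ u, x = a * b * u * b * a := by
  constructor
  · rintro ⟨u, rfl⟩
    refine ⟨a * u * a, ?_⟩
    rw [mul_mul_sandwich_of_mul_mul_eq h, sandwich_mul_mul_of_mul_mul_eq h]
  · rintro ⟨u, rfl⟩
    exact ⟨b * u * b, by simp only [mul_assoc]⟩

end RegularPair

theorem stmt_6_general {S : Type*} [Semigroup S] (a b : S)
    (ha : a = a * b * a) :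
    a * b * a = a ∧
    {x : S | ∃ u, x = a * u * a} = {x : S | ∃ u, x = a * b * u * b * a} ∧
    a ∈ {x : S | ∃ u, x = a * u * a} ∧
    (∀ x ∈ {x : S | ∃ u, x = a * u * a}, ∀ y ∈ {x : S | ∃ u, x = a * u * a},
      x * b * y ∈ {x : S | ∃ u, x = a * u * a}) ∧
    (∀ x ∈ {x : S | ∃ u, x = a * u * a}, a * b * x = x ∧ x * b * a = x) := by
  have h : a * b * a = a := ha.symm
  refine ⟨h, Set.ext (exists_eq_sandwich_iff_of_mul_mul_eq h), ⟨b, ha⟩, ?_, ?_⟩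
  · rintro _ ⟨u, rfl⟩ _ ⟨v, rfl⟩
    exact ⟨u * a * v, sandwich_mul_sandwich_of_mul_mul_eq h u v⟩
  · rintro _ ⟨u, rfl⟩
    exact ⟨mul_mul_sandwich_of_mul_mul_eq h u, sandwich_mul_mul_of_mul_mul_eq h u⟩

/-- If `a = aba` and `b = bab` in a semigroup `S`, then `a` is an
idempotent of the variant `S^b` (i.e. `a ⋆_b a = a`), the set `aSa` equals
`{a ⋆_b x ⋆_b a : x ∈ S}`, and `(aSa, ⋆_b)` is a monoid with identity `a`
(it contains `a`, is closed under `⋆_b`, and `a` is a two-sided `⋆_b`-identity). -/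
theorem stmt_6 {S : Type*} [Semigroup S] (a b : S)
    (ha : a = a * b * a) (hb : b = b * a * b) :
    a * b * a = a ∧
    {x : S | ∃ u, x = a * u * a} = {x : S | ∃ u, x = a * b * u * b * a} ∧
    a ∈ {x : S | ∃ u, x = a * u * a} ∧
    (∀ x ∈ {x : S | ∃ u, x = a * u * a}, ∀ y ∈ {x : S | ∃ u, x = a * u * a},
      x * b * y ∈ {x : S | ∃ u, x = a * u * a}) ∧
    (∀ x ∈ {x : S | ∃ u, x = a * u * a}, a * b * x = x ∧ x * b * a = x) :=
  stmt_6_general a b ha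
end

section
/- Let a and b be elements of a semigroup S satisfying a = aba and b = bab. Then the map x ↦ xb is a semigroup isomorphism from (aSa, ⋆_b) onto (aSb, ·), where · is the operation of S restricted to aSb. -/
/-! Right multiplication by `b` and by `a` are mutually inverse maps between `aSa` and `aSb`:
`(aua)ba = au(aba) = aua` and `(aub)ab = au(bab) = aub`. The homomorphism property
`(xby)b = (xb)(yb)` is associativity. -/

namespace Semigroup

variable {S : Type*} [Semigroup S]

/-- The set `aSb`. -/
def sandwich (a b : S) : Set S := {x | ∃ u, x = a * u * b}

theorem mapsTo_mul_right_sandwich (a b c : S) :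
    Set.MapsTo (· * c) (sandwich a b) (sandwich a c) := by
  rintro _ ⟨u, rfl⟩
  exact ⟨u * b, by simp only [mul_assoc]⟩

theorem mul_mul_eq_self_of_mem_sandwich {a c d x : S} (hc : c = c * d * c)
    (hx : x ∈ sandwich a c) : x * d * c = x := by
  obtain ⟨u, rfl⟩ := hx
  calc a * u * c * d * c = a * u * (c * d * c) := by simp only [mul_assoc]
    _ = a * u * c := by rw [← hc]

theorem invOn_mul_right_sandwich {a b : S} (ha : a = a * b * a) (hb : b = b * a * b) :
    Set.InvOn (· * a) (· * b) (sandwich a a) (sandwich a b) :=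
  ⟨fun _ hx => mul_mul_eq_self_of_mem_sandwich ha hx,
    fun _ hy => mul_mul_eq_self_of_mem_sandwich hb hy⟩

theorem bijOn_mul_right_sandwich {a b : S} (ha : a = a * b * a) (hb : b = b * a * b) :
    Set.BijOn (· * b) (sandwich a a) (sandwich a b) :=
  (invOn_mul_right_sandwich ha hb).bijOn (mapsTo_mul_right_sandwich a a b)
    (mapsTo_mul_right_sandwich a b a)

end Semigroup

/-- If `a = aba` and `b = bab` in a semigroup `S`, then `x ↦ xb`
is a semigroup isomorphism from `(aSa, ⋆_b)` (where `x ⋆_b y = xby`) onto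
`(aSb, ·)`: it is a bijection of `aSa` onto `aSb` and a homomorphism. -/
theorem stmt_7 {S : Type*} [Semigroup S] (a b : S)
    (ha : a = a * b * a) (hb : b = b * a * b) :
    Set.BijOn (· * b) {x : S | ∃ u, x = a * u * a} {x : S | ∃ u, x = a * u * b} ∧
    ∀ x ∈ {x : S | ∃ u, x = a * u * a}, ∀ y ∈ {x : S | ∃ u, x = a * u * a},
      (x * b * y) * b = (x * b) * (y * b) :=
  ⟨Semigroup.bijOn_mul_right_sandwich ha hb, fun _ _ _ _ => by simp only [mul_assoc]⟩
end

section
/- Let a and b be elements of a semigroup S satisfying a = aba and b = bab. Then the semigroups (aSa, ⋆_b) and (bSb, ⋆_a) are isomorphic. -/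
/-!
The map `x ↦ b x b` is the isomorphism, with inverse `y ↦ a y a`: on `aSa` one has
`a (b x b) a = (a b a) u (a b a) = x` for `x = a u a`, symmetrically on `bSb`, and
`(b x b) a (b y b) = b x (b a b) y b = b (x b y) b`.
-/

namespace Semigroup

variable {S : Type*} [Semigroup S]

def sandwichSet (a : S) : Set S := {x | ∃ u, x = a * u * a}

theorem mul_mul_mem_sandwichSet (b x : S) : b * x * b ∈ sandwichSet b := ⟨x, rfl⟩

theorem sandwich_sandwich_eq_self {a b x : S} (ha : a = a * b * a) (hx : x ∈ sandwichSet a) :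
    a * (b * x * b) * a = x := by
  obtain ⟨u, rfl⟩ := hx
  calc a * (b * (a * u * a) * b) * a = (a * b * a) * u * (a * b * a) := by simp only [mul_assoc]
    _ = a * u * a := by rw [← ha]

theorem sandwich_invOn {a b : S} (ha : a = a * b * a) (hb : b = b * a * b) :
    Set.InvOn (fun y => a * y * a) (fun x => b * x * b) (sandwichSet a) (sandwichSet b) :=
  ⟨fun _ hx => sandwich_sandwich_eq_self ha hx, fun _ hy => sandwich_sandwich_eq_self hb hy⟩

theorem sandwich_mul_mul_sandwich {a b : S} (hb : b = b * a * b) (x y : S) :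
    b * (x * b * y) * b = b * x * b * a * (b * y * b) :=
  calc b * (x * b * y) * b = b * x * (b * a * b) * y * b := by rw [← hb]; simp only [mul_assoc]
    _ = b * x * b * a * (b * y * b) := by simp only [mul_assoc]

end Semigroup

/-- If `a = aba` and `b = bab` in a semigroup `S`, then
`(aSa, ⋆_b)` and `(bSb, ⋆_a)` are isomorphic semigroups: there is a bijection
`φ` of `aSa` onto `bSb` with `φ (x ⋆_b y) = φ x ⋆_a φ y` on `aSa`. -/
theorem stmt_8 {S : Type*} [Semigroup S] (a b : S)
    (ha : a = a * b * a) (hb : b = b * a * b) :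
    ∃ φ : S → S,
      Set.BijOn φ {x : S | ∃ u, x = a * u * a} {x : S | ∃ u, x = b * u * b} ∧
      ∀ x ∈ {x : S | ∃ u, x = a * u * a}, ∀ y ∈ {x : S | ∃ u, x = a * u * a},
        φ (x * b * y) = φ x * a * φ y :=
  ⟨fun x => b * x * b,
    (Semigroup.sandwich_invOn ha hb).bijOn (fun x _ => Semigroup.mul_mul_mem_sandwichSet b x)
      (fun y _ => Semigroup.mul_mul_mem_sandwichSet a y),
    fun x _ y _ => Semigroup.sandwich_mul_mul_sandwich hb x y⟩
end

section
/- Let n be a positive integer and let a ∈ T_n with rank(a) = r. Then the variant T_n^a embeds in T_{2n−r}, i.e. there is an injective semigroup homomorphism from (T_n, ⋆_a) into T_{2n−r}. -/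
/-!
Put `γ := α ⊕ (range a)ᶜ`, with the inclusion `i := inl : α → γ` and the surjection
`g := Sum.elim a val : γ → α`, so that `g ∘ i = a`. Then `x ↦ i ∘ x ∘ g` is injective
(`i` is injective and `g` surjective) and turns `y ∘ a ∘ x = y ∘ (g ∘ i) ∘ x` into the
composite of the images of `y` and `x`. For `α = Fin n` the set `γ` has `n + (n - r)` elements.
-/

open Function Set

section Conjugation

variable {α γ : Type*} {i : α → γ} {g : γ → α}

theorem injective_comp_comp (hi : Injective i) (hg : Surjective g) :
    Injective fun x : α → α => i ∘ x ∘ g :=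
  hg.injective_comp_right.comp hi.comp_left

theorem comp_comp_variant_mul {a : α → α} (hgi : g ∘ i = a) (x y : α → α) :
    i ∘ (y ∘ a ∘ x) ∘ g = (i ∘ y ∘ g) ∘ (i ∘ x ∘ g) := by
  subst hgi; rfl

end Conjugation

theorem surjective_sumElim_val_compl {α : Type*} (a : α → α) :
    Surjective (Sum.elim a (Subtype.val : ↥(range a)ᶜ → α)) := by
  intro q
  by_cases hq : q ∈ range a
  · obtain ⟨p, rfl⟩ := hq
    exact ⟨.inl p, rfl⟩
  · exact ⟨.inr ⟨q, hq⟩, rfl⟩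

theorem Nat.card_sum_compl_range {α : Type*} [Finite α] (a : α → α) :
    Nat.card (α ⊕ ↥(range a)ᶜ) = 2 * Nat.card α - (range a).ncard := by
  have hcompl := (range a).ncard_add_ncard_compl
  rw [Nat.card_sum, Nat.card_coe_set_eq]
  omega

theorem stmt_15_general (n r : ℕ) (a : Fin n → Fin n)
    (hr : Set.ncard (Set.range a) = r) :
    ∃ φ : (Fin n → Fin n) → (Fin (2 * n - r) → Fin (2 * n - r)),
      Function.Injective φ ∧ ∀ x y : Fin n → Fin n, φ (y ∘ a ∘ x) = φ y ∘ φ x := by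
  have hcard : Nat.card (Fin n ⊕ ↥(range a)ᶜ) = 2 * n - r := by
    rw [Nat.card_sum_compl_range, Nat.card_eq_fintype_card, Fintype.card_fin, hr]
  let e := Finite.equivFinOfCardEq hcard
  let i : Fin n → Fin (2 * n - r) := e ∘ Sum.inl
  let g : Fin (2 * n - r) → Fin n := Sum.elim a Subtype.val ∘ e.symm
  have hgi : g ∘ i = a := by
    ext p
    simp [g, i]
  refine ⟨fun x => i ∘ x ∘ g, injective_comp_comp ?_ ?_, comp_comp_variant_mul hgi⟩
  · exact e.injective.comp Sum.inl_injective
  · exact (surjective_sumElim_val_compl a).comp e.symm.surjective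

/-- Let `n` be a positive integer and `a ∈ T_n` with `rank a = r`.
Then the variant `T_n^a` (operation `x ⋆_a y = y ∘ a ∘ x`, left-to-right) embeds in
`T_{2n-r}` (left-to-right product of `x` and `y` is `y ∘ x`). -/
theorem stmt_15 (n r : ℕ) (hn : 0 < n) (a : Fin n → Fin n)
    (hr : Set.ncard (Set.range a) = r) :
    ∃ φ : (Fin n → Fin n) → (Fin (2 * n - r) → Fin (2 * n - r)),
      Function.Injective φ ∧ ∀ x y : Fin n → Fin n, φ (y ∘ a ∘ x) = φ y ∘ φ x :=
  stmt_15_general n r a hr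
end

section
/- Let n be a positive integer and let a ∈ T_n with rank(a) = n − 1. Then the minimal degree of the variant T_n^a is n + 1; that is, n + 1 is the least positive integer m such that there exists an injective semigroup homomorphism from (T_n, ⋆_a) into T_m. -/
/-!
Write `ι = Fin.castSucc : Fin n → Fin (n + 1)`. Since `a` misses exactly one point `c`, the map
`g = Fin.snoc a c : Fin (n + 1) → Fin n` is surjective and `g ∘ ι = a`, so `x ↦ ι ∘ x ∘ g` is an
injective homomorphism from `T_n^a` into `T_{n+1}`. Conversely, `T_n^a` cannot embed in `T_m`
for `m < n` by counting, and an embedding into `T_n` would be bijective: the preimage `e` of the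
identity satisfies `e ∘ a ∘ x = x` for all `x`, so `a` would be injective, i.e. of rank `n`.
-/

open Function

section VariantEmbedding

variable {α β : Type*} {a : α → α}

theorem injective_conj_of_injective_of_surjective {ι : α → β} {g : β → α}
    (hι : Injective ι) (hg : Surjective g) : Injective fun x : α → α => ι ∘ x ∘ g :=
  hι.comp_left.comp hg.injective_comp_right

theorem conj_comp_variant {ι : α → β} {g : β → α} (hgι : g ∘ ι = a) (x y : α → α) :
    ι ∘ (y ∘ a ∘ x) ∘ g = (ι ∘ y ∘ g) ∘ (ι ∘ x ∘ g) := by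
  simp only [← hgι, comp_assoc]

theorem Finite.injective_of_variant_embedding [Finite α] {φ : (α → α) → (α → α)}
    (hφ : Injective φ) (hom : ∀ x y : α → α, φ (y ∘ a ∘ x) = φ y ∘ φ x) : Injective a := by
  obtain ⟨e, he⟩ := Finite.injective_iff_surjective.mp hφ id
  have hcancel : ∀ x, e ∘ a ∘ x = x := fun x => hφ (by rw [hom, he, id_comp])
  exact LeftInverse.injective (g := e) (congrFun (hcancel id))

theorem Finite.card_le_of_injective_endo [Finite α] [Finite β] [Nonempty β]
    {φ : (α → α) → (β → β)} (hφ : Injective φ) : Nat.card α ≤ Nat.card β := by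
  have hcard := Nat.card_le_card_of_injective φ hφ
  rw [Nat.card_fun, Nat.card_fun] at hcard
  by_contra! hlt
  have hβ : 0 < Nat.card β := Nat.card_pos
  have := calc Nat.card β ^ Nat.card β
      _ ≤ Nat.card β ^ Nat.card α := Nat.pow_le_pow_right hβ hlt.le
      _ < Nat.card α ^ Nat.card α := Nat.pow_lt_pow_left hlt (by omega)
  omega

end VariantEmbedding

theorem Set.exists_compl_eq_singleton_of_ncard_add_one {α : Type*} [Finite α] {s : Set α}
    (hs : s.ncard + 1 = Nat.card α) : ∃ c, sᶜ = {c} := by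
  have := s.ncard_add_ncard_compl
  exact Set.ncard_eq_one.mp (by omega)

theorem Fin.surjective_snoc_of_range_compl {α : Type*} {n : ℕ} {f : Fin n → α} {c : α}
    (hc : (Set.range f)ᶜ = {c}) : Surjective (Fin.snoc f c : Fin (n + 1) → α) := by
  intro y
  by_cases hy : y ∈ Set.range f
  · obtain ⟨i, rfl⟩ := hy
    exact ⟨i.castSucc, Fin.snoc_castSucc ..⟩
  · rw [← Set.mem_compl_iff, hc, Set.mem_singleton_iff] at hy
    exact ⟨Fin.last n, by rw [Fin.snoc_last, hy]⟩

/-- Let `n` be a positive integer and `a ∈ T_n` with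
`rank a = n - 1`.  Then `n + 1` is the least positive integer `m` such that there
is an injective semigroup homomorphism from `(T_n, ⋆_a)` (where `x ⋆_a y = y ∘ a ∘ x`,
left-to-right) into `T_m` (left-to-right product of `x` and `y` is `y ∘ x`). -/
theorem stmt_16 (n : ℕ) (hn : 0 < n) (a : Fin n → Fin n)
    (hr : Set.ncard (Set.range a) = n - 1) :
    IsLeast {m : ℕ | 0 < m ∧ ∃ φ : (Fin n → Fin n) → (Fin m → Fin m),
      Function.Injective φ ∧ ∀ x y : Fin n → Fin n, φ (y ∘ a ∘ x) = φ y ∘ φ x}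
      (n + 1) := by
  obtain ⟨c, hc⟩ := Set.exists_compl_eq_singleton_of_ncard_add_one (s := Set.range a)
    (by rw [Nat.card_eq_fintype_card, Fintype.card_fin]; omega)
  refine ⟨⟨n.succ_pos, fun x => Fin.castSucc ∘ x ∘ Fin.snoc a c, ?_, ?_⟩, ?_⟩
  · exact injective_conj_of_injective_of_surjective (Fin.castSucc_injective n)
      (Fin.surjective_snoc_of_range_compl hc)
  · exact conj_comp_variant Fin.snoc_comp_castSucc
  · rintro m ⟨hm, φ, hφ, hom⟩
    have : NeZero m := ⟨hm.ne'⟩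
    have hnm := Finite.card_le_of_injective_endo hφ
    simp only [Nat.card_eq_fintype_card, Fintype.card_fin] at hnm
    by_contra! hlt
    obtain rfl : m = n := by omega
    have ha := Finite.injective_of_variant_embedding hφ hom
    rw [(Finite.injective_iff_surjective.mp ha).range_eq, Set.ncard_univ,
      Nat.card_eq_fintype_card, Fintype.card_fin] at hr
    omega
end

section
/- Let X be a finite set and let a ∈ T_X. Then for any permutation p of X, the variants T_X^a and T_X^{pa} are isomorphic semigroups; moreover, there exists a permutation p of X such that pa is an idempotent of T_X. -/
/-!
Post-composing with `p⁻¹` carries `y ∘ a ∘ x` to `(p⁻¹ ∘ y) ∘ (a ∘ p) ∘ (p⁻¹ ∘ x)`, which gives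
the isomorphism of variants. For the idempotent, let `p` send each point of the range of `a` to a
chosen preimage under `a`; this injection of a finite set extends to a permutation, and then
`a ∘ p` is the identity on its own range `range a`.
-/

open Function Set

theorem Equiv.Perm.exists_apply_mem_range_eq {X : Type*} (a : X → X) [Finite (range a)] :
    ∃ p : Equiv.Perm X, ∀ y ∈ range a, a (p y) = y := by
  obtain ⟨p, hp⟩ := Equiv.Perm.exists_extending_pair (Subtype.val : range a → X)
    (rangeSplitting a) Subtype.val_injective (rangeSplitting_injective a)
  refine ⟨p, fun y hy => ?_⟩
  rw [hp ⟨y, hy⟩, apply_rangeSplitting a ⟨y, hy⟩]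

theorem comp_idempotent_of_forall_mem_range {α β : Type*} {f : β → α} {g : α → β}
    (h : ∀ y ∈ range f, f (g y) = y) : (f ∘ g) ∘ (f ∘ g) = f ∘ g :=
  funext fun _ => h _ (mem_range_self _)

/-- Composing left-to-right, `pa` is the function `a ∘ p` and `x ⋆_a y = y ∘ a ∘ x`. -/
theorem stmt_18 {X : Type*} [Fintype X] (a : X → X) :
    (∀ p : Equiv.Perm X, ∃ φ : (X → X) → (X → X), Function.Bijective φ ∧
      ∀ x y : X → X, φ (y ∘ a ∘ x) = φ y ∘ (a ∘ ⇑p) ∘ φ x) ∧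
    ∃ p : Equiv.Perm X, (a ∘ ⇑p) ∘ (a ∘ ⇑p) = a ∘ ⇑p := by
  refine ⟨fun p => ⟨(p.symm ∘ ·), p.symm.bijective.comp_left, fun _ _ => ?_⟩, ?_⟩
  · ext z
    simp
  · obtain ⟨p, hp⟩ := Equiv.Perm.exists_apply_mem_range_eq a
    exact ⟨p, comp_idempotent_of_forall_mem_range hp⟩
end

section
/- Let S be a finite semigroup, let a ∈ S, and suppose φ : S → T_n is an injective semigroup homomorphism with rank(aφ) = r. Then the variant S^a embeds in T_{2n−r}; in particular, the minimal degree of S^a satisfies μ(S^a) ≤ 2n − r. -/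
/-!
Adjoin to the `n` points on which `S` acts a copy of every point outside the image of `aφ`.
Let `s` send a point `i` of the original copy to `(i)(aφ)(sφ)`, and the adjoined copy of `j` to
`(j)(sφ)`.  This is a representation of `S^a`, and it is faithful because the original copy
recovers `sφ` on the image of `aφ`, while the adjoined copy recovers it everywhere else.
-/

namespace Function

variable {S α : Type*}

def variantExtension (φ : S → α → α) (a s : S) :
    α ⊕ ↥(Set.range (φ a))ᶜ → α ⊕ ↥(Set.range (φ a))ᶜ
  | .inl i => .inl (φ s (φ a i))
  | .inr j => .inl (φ s j)

theorem variantExtension_injective {φ : S → α → α} (hφ : Injective φ) (a : S) :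
    Injective (variantExtension φ a) := by
  intro x y hxy
  apply hφ
  funext i
  by_cases hi : i ∈ Set.range (φ a)
  · obtain ⟨j, rfl⟩ := hi
    simpa [variantExtension] using congrFun hxy (Sum.inl j)
  · simpa [variantExtension] using congrFun hxy (Sum.inr ⟨i, hi⟩)

theorem variantExtension_mul_mul [Mul S] {φ : S → α → α} (hφ : ∀ x y, φ (x * y) = φ y ∘ φ x)
    (a x y : S) :
    variantExtension φ a (x * a * y) = variantExtension φ a y ∘ variantExtension φ a x := by
  funext z
  cases z <;> simp [variantExtension, hφ]

theorem _root_.Nat.card_sum_compl_range_s19 [Finite α] (f : α → α) :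
    Nat.card (α ⊕ ↥(Set.range f)ᶜ) = 2 * Nat.card α - (Set.range f).ncard := by
  rw [Nat.card_sum, Nat.card_coe_set_eq, Set.ncard_compl, two_mul,
    Nat.add_sub_assoc (Set.ncard_le_card _)]

end Function

theorem stmt_19_general {S : Type*} [Semigroup S] (a : S) (n : ℕ)
    (φ : S → Fin n → Fin n) (hinj : Function.Injective φ)
    (hhom : ∀ x y : S, φ (x * y) = φ y ∘ φ x)
    (r : ℕ) (hr : Set.ncard (Set.range (φ a)) = r) :
    (∃ ψ : S → Fin (2 * n - r) → Fin (2 * n - r),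
        Function.Injective ψ ∧ ∀ x y : S, ψ (x * a * y) = ψ y ∘ ψ x) ∧
    sInf {m : ℕ | ∃ ψ : S → Fin m → Fin m,
        Function.Injective ψ ∧ ∀ x y : S, ψ (x * a * y) = ψ y ∘ ψ x} ≤ 2 * n - r := by
  obtain ⟨ψ, hψ_inj, hψ_mul⟩ : ∃ ψ : S → Fin (2 * n - r) → Fin (2 * n - r),
      Function.Injective ψ ∧ ∀ x y : S, ψ (x * a * y) = ψ y ∘ ψ x := by
    have hcard : Nat.card (Fin n ⊕ ↥(Set.range (φ a))ᶜ) = 2 * n - r := by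
      rw [Nat.card_sum_compl_range_s19, Nat.card_fin, hr]
    let e := (Finite.equivFin _).trans (finCongr hcard)
    refine ⟨e.conj ∘ Function.variantExtension φ a,
      e.conj.injective.comp (Function.variantExtension_injective hinj a), fun x y => ?_⟩
    simp only [Function.comp_apply, Function.variantExtension_mul_mul hhom, Equiv.conj_comp]
  exact ⟨⟨ψ, hψ_inj, hψ_mul⟩, Nat.sInf_le ⟨ψ, hψ_inj, hψ_mul⟩⟩

/-- Let `S` be a finite semigroup, `a ∈ S`, and
`φ : S → T_n` an injective semigroup homomorphism (composition in `T_n` written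
left-to-right: `φ (x * y) = φ y ∘ φ x`) with `rank (aφ) = r`.  Then the variant
`S^a` embeds in `T_{2n-r}`; in particular the minimal degree of `S^a` is at most
`2n - r`. -/
theorem stmt_19 {S : Type*} [Semigroup S] [Fintype S] (a : S) (n : ℕ)
    (φ : S → Fin n → Fin n) (hinj : Function.Injective φ)
    (hhom : ∀ x y : S, φ (x * y) = φ y ∘ φ x)
    (r : ℕ) (hr : Set.ncard (Set.range (φ a)) = r) :
    (∃ ψ : S → Fin (2 * n - r) → Fin (2 * n - r),
        Function.Injective ψ ∧ ∀ x y : S, ψ (x * a * y) = ψ y ∘ ψ x) ∧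
    sInf {m : ℕ | ∃ ψ : S → Fin m → Fin m,
        Function.Injective ψ ∧ ∀ x y : S, ψ (x * a * y) = ψ y ∘ ψ x} ≤ 2 * n - r :=
  stmt_19_general a n φ hinj hhom r hr
end
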